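/- If f is a polynomial of degree at most 2n−1, then ∫_{-1}^1 f^{(n)}(x) φ(x) dx = 0 for a monic polynomial φ of degree n if and only if φ = 2^n(n!)²/(2n)! · P_n, where P_n is the Legendre polynomial; in particular, the corrected trapezoidal formula with the normalized Legendre polynomial has degree of exactness 2n−1. -/

import Mathlib

open Polynomial intervalIntegral

/-- The degree-`n` Legendre polynomial, via Rodrigues' formula. -/
noncomputable def legendre (n : ℕ) : Polynomial ℝ :=
  Polynomial.C (1 / (2 ^ n * (n.factorial : ℝ))) *
    Polynomial.derivative^[n] ((Polynomial.X ^ 2 - 1) ^ n)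

/-!
All derivatives of order `< n` of `(X² - 1)ⁿ` vanish at `±1`, so `n` integrations by parts
show that `Pₙ ∝ Dⁿ (X² - 1)ⁿ` is orthogonal on `[-1, 1]` to every polynomial of degree `< n`.
Since `f ↦ f⁽ⁿ⁾` maps the polynomials of degree `≤ 2n - 1` onto those of degree `< n`, the
exactness condition says precisely that `φ` has this orthogonality property. Two monic
polynomials of degree `n` with it differ by some `δ` of degree `< n` orthogonal to both, hence
`∫ δ² = 0` and `δ = 0`.
-/

namespace Polynomial

section Antiderivative

variable {K : Type*} [Field K]

noncomputable def iteratedAntiderivative (n : ℕ) (p : K[X]) : K[X] :=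
  ∑ i ∈ p.support, C (p.coeff i / (i + n).descFactorial n) * X ^ (i + n)

theorem iterate_derivative_iteratedAntiderivative [CharZero K] (n : ℕ) (p : K[X]) :
    derivative^[n] (iteratedAntiderivative n p) = p := by
  conv_rhs => rw [p.as_sum_support_C_mul_X_pow]
  rw [iteratedAntiderivative, iterate_derivative_sum]
  refine Finset.sum_congr rfl fun i _ => ?_
  have hd : ((i + n).descFactorial n : K) ≠ 0 := by
    exact_mod_cast (Nat.descFactorial_pos.mpr (Nat.le_add_left n i)).ne'
  rw [iterate_derivative_C_mul, iterate_derivative_X_pow_eq_C_mul, Nat.add_sub_cancel, ← mul_assoc,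
    ← C_mul, div_mul_cancel₀ _ hd]

theorem natDegree_iteratedAntiderivative_le (n : ℕ) (p : K[X]) :
    (iteratedAntiderivative n p).natDegree ≤ p.natDegree + n :=
  natDegree_sum_le_of_forall_le _ _ fun i hi =>
    natDegree_C_mul_X_pow_le _ _ |>.trans (by have := le_natDegree_of_mem_supp i hi; omega)

end Antiderivative

section Integral

variable {a b : ℝ}

theorem integral_eval_mul_eval_derivative (u v : ℝ[X]) :
    ∫ x in a..b, u.eval x * (derivative v).eval x =
      u.eval b * v.eval b - u.eval a * v.eval a -
        ∫ x in a..b, (derivative u).eval x * v.eval x :=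
  integral_mul_deriv_eq_deriv_mul (fun x _ => u.hasDerivAt x) (fun x _ => v.hasDerivAt x)
    ((derivative u).continuous.intervalIntegrable _ _)
    ((derivative v).continuous.intervalIntegrable _ _)

theorem integral_eval_mul_eval_iterate_derivative_eq_zero {n : ℕ} {g w : ℝ[X]}
    (hw : ∀ k < n, (derivative^[k] w).eval a = 0 ∧ (derivative^[k] w).eval b = 0)
    (hg : derivative^[n] g = 0) :
    ∫ x in a..b, g.eval x * (derivative^[n] w).eval x = 0 := by
  induction n generalizing g with
  | zero => simp [show g = 0 from hg]
  | succ n ih =>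
    obtain ⟨hwa, hwb⟩ := hw n n.lt_succ_self
    have hg' : derivative^[n] (derivative g) = 0 := hg
    rw [Function.iterate_succ_apply', integral_eval_mul_eval_derivative, hwa, hwb,
      ih (fun k hk => hw k (hk.trans n.lt_succ_self)) hg']
    ring

theorem eq_zero_of_integral_eval_sq_eq_zero (hab : a < b) {p : ℝ[X]}
    (h : ∫ x in a..b, p.eval x ^ 2 = 0) : p = 0 := by
  have hae := (integral_eq_zero_iff_of_le_of_nonneg_ae hab.le
    (Filter.Eventually.of_forall fun x => sq_nonneg (p.eval x))
    ((p.continuous.pow 2).intervalIntegrable _ _)).mp h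
  have hIoo : Set.EqOn (fun x => p.eval x ^ 2) 0 (Set.Ioo a b) :=
    MeasureTheory.Measure.eqOn_open_of_ae_eq
      (MeasureTheory.ae_restrict_of_ae_restrict_of_subset Set.Ioo_subset_Ioc_self hae) isOpen_Ioo
      (p.continuous.pow 2).continuousOn continuousOn_const
  refine p.eq_zero_of_infinite_isRoot ((Set.Ioo_infinite hab).mono fun x hx => ?_)
  simpa using hIoo hx

theorem eq_of_monic_of_forall_integral_eq_zero (hab : a < b) {n : ℕ} {φ χ : ℝ[X]}
    (hφ : φ.Monic) (hχ : χ.Monic) (hφn : φ.natDegree = n) (hχn : χ.natDegree = n)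
    (hφo : ∀ g : ℝ[X], g.degree < n → ∫ x in a..b, g.eval x * φ.eval x = 0)
    (hχo : ∀ g : ℝ[X], g.degree < n → ∫ x in a..b, g.eval x * χ.eval x = 0) :
    φ = χ := by
  have hdeg : (φ - χ).degree < n := by
    have := degree_sub_lt_left
      (by rw [degree_eq_natDegree hφ.ne_zero, degree_eq_natDegree hχ.ne_zero, hφn, hχn])
      hφ.ne_zero (hφ.leadingCoeff.trans hχ.leadingCoeff.symm)
    rwa [degree_eq_natDegree hφ.ne_zero, hφn] at this
  refine sub_eq_zero.mp (eq_zero_of_integral_eval_sq_eq_zero hab ?_)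
  calc ∫ x in a..b, (φ - χ).eval x ^ 2
      = (∫ x in a..b, (φ - χ).eval x * φ.eval x) - ∫ x in a..b, (φ - χ).eval x * χ.eval x := by
        rw [← integral_sub (f := fun x => (φ - χ).eval x * φ.eval x)
          (g := fun x => (φ - χ).eval x * χ.eval x)
          (((φ - χ).continuous.mul φ.continuous).intervalIntegrable _ _)
          (((φ - χ).continuous.mul χ.continuous).intervalIntegrable _ _)]
        congr 1 with x
        rw [eval_sub]
        ring
    _ = 0 := by rw [hφo _ hdeg, hχo _ hdeg, sub_zero]

end Integral

section XSqSubOnePow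

variable {R : Type*} [CommRing R]

theorem monic_X_sq_sub_one_pow (n : ℕ) : ((X ^ 2 - 1 : R[X]) ^ n).Monic := by
  simpa only [C_1] using (monic_X_pow_sub_C (1 : R) two_ne_zero).pow n

theorem natDegree_X_sq_sub_one_pow [Nontrivial R] (n : ℕ) :
    ((X ^ 2 - 1 : R[X]) ^ n).natDegree = 2 * n := by
  rw [← C_1, (monic_X_pow_sub_C (1 : R) two_ne_zero).natDegree_pow, natDegree_X_pow_sub_C,
    mul_comm]

theorem eval_iterate_derivative_X_sq_sub_one_pow_eq_zero {n k : ℕ} (hk : k < n) {x : R}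
    (hx : x ^ 2 = 1) : (derivative^[k] ((X ^ 2 - 1 : R[X]) ^ n)).eval x = 0 := by
  obtain ⟨q, hq⟩ := pow_sub_dvd_iterate_derivative_pow (X ^ 2 - 1 : R[X]) n k
  rw [hq, eval_mul, eval_pow, eval_sub, eval_pow, eval_X, eval_one, hx, sub_self,
    zero_pow (by omega), zero_mul]

end XSqSubOnePow

end Polynomial

theorem integral_eval_mul_eval_legendre_eq_zero {n : ℕ} {g : ℝ[X]}
    (hg : derivative^[n] g = 0) : ∫ x in (-1 : ℝ)..1, g.eval x * (legendre n).eval x = 0 := by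
  have hw (k : ℕ) (hk : k < n) :
      (derivative^[k] ((X ^ 2 - 1 : ℝ[X]) ^ n)).eval (-1) = 0 ∧
        (derivative^[k] ((X ^ 2 - 1 : ℝ[X]) ^ n)).eval 1 = 0 :=
    ⟨eval_iterate_derivative_X_sq_sub_one_pow_eq_zero hk (by norm_num),
      eval_iterate_derivative_X_sq_sub_one_pow_eq_zero hk (by norm_num)⟩
  simp_rw [legendre, eval_mul, eval_C, mul_left_comm _ (1 / _ : ℝ)]
  rw [integral_const_mul, integral_eval_mul_eval_iterate_derivative_eq_zero hw hg, mul_zero]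

theorem coeff_legendre_self (n : ℕ) :
    (legendre n).coeff n = (2 * n).factorial / (2 ^ n * (n.factorial : ℝ) ^ 2) := by
  have hlead : ((X ^ 2 - 1 : ℝ[X]) ^ n).coeff (n + n) = 1 := by
    rw [← two_mul, ← natDegree_X_sq_sub_one_pow (R := ℝ) n]
    exact (monic_X_sq_sub_one_pow n).coeff_natDegree
  have hfac : (n.factorial : ℝ) * (2 * n).descFactorial n = (2 * n).factorial := by
    have := Nat.factorial_mul_descFactorial (show n ≤ 2 * n by omega)
    rw [show 2 * n - n = n by omega] at this
    exact_mod_cast this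
  rw [legendre, coeff_C_mul, coeff_iterate_derivative, hlead, nsmul_one, ← two_mul, ← hfac]
  field_simp

theorem natDegree_legendre (n : ℕ) : (legendre n).natDegree = n := by
  refine natDegree_eq_of_le_of_coeff_ne_zero ?_ (by rw [coeff_legendre_self]; positivity)
  refine (natDegree_C_mul_le _ _).trans ((natDegree_iterate_derivative _ n).trans ?_)
  rw [natDegree_X_sq_sub_one_pow]
  omega

noncomputable def monicLegendre (n : ℕ) : ℝ[X] :=
  C ((2 : ℝ) ^ n * (n.factorial : ℝ) ^ 2 / ((2 * n).factorial : ℝ)) * legendre n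

theorem coeff_monicLegendre_self (n : ℕ) : (monicLegendre n).coeff n = 1 := by
  rw [monicLegendre, coeff_C_mul, coeff_legendre_self]
  field_simp

theorem natDegree_monicLegendre (n : ℕ) : (monicLegendre n).natDegree = n := by
  rw [monicLegendre, natDegree_C_mul (by positivity), natDegree_legendre]

theorem monicLegendre_monic (n : ℕ) : (monicLegendre n).Monic := by
  rw [Monic, leadingCoeff, natDegree_monicLegendre, coeff_monicLegendre_self]

theorem integral_eval_mul_eval_monicLegendre_eq_zero {n : ℕ} {g : ℝ[X]}
    (hg : derivative^[n] g = 0) :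
    ∫ x in (-1 : ℝ)..1, g.eval x * (monicLegendre n).eval x = 0 := by
  simp_rw [monicLegendre, eval_mul, eval_C, mul_left_comm (g.eval _)]
  rw [integral_const_mul, integral_eval_mul_eval_legendre_eq_zero hg, mul_zero]

/-- A monic polynomial `φ` of degree `n` satisfies `∫_{-1}^1 f⁽ⁿ⁾ φ = 0` for every
polynomial `f` of degree at most `2n−1` if and only if `φ` is the normalized Legendre
polynomial `2ⁿ(n!)²/(2n)! · Pₙ`; i.e. the corrected trapezoidal rule with the normalized
Legendre polynomial has degree of exactness `2n−1`. -/
theorem legendre_degree_of_exactness (n : ℕ) (hn : 1 ≤ n)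
    (φ : Polynomial ℝ) (hmonic : φ.Monic) (hdeg : φ.natDegree = n) :
    (∀ f : Polynomial ℝ, f.natDegree ≤ 2 * n - 1 →
        ∫ x in (-1 : ℝ)..1, (Polynomial.derivative^[n] f).eval x * φ.eval x = 0)
      ↔ φ = Polynomial.C ((2 : ℝ) ^ n * (n.factorial : ℝ) ^ 2 / ((2 * n).factorial : ℝ)) *
            legendre n := by
  change _ ↔ φ = monicLegendre n
  constructor
  · intro H
    refine eq_of_monic_of_forall_integral_eq_zero (a := -1) (b := 1) (by norm_num) hmonic
      (monicLegendre_monic n) hdeg (natDegree_monicLegendre n) (fun g hg => ?_)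
      fun g hg => integral_eval_mul_eval_monicLegendre_eq_zero
        (iterate_derivative_eq_zero_of_degree_lt hg)
    have hgn : g.natDegree < n := by
      rcases eq_or_ne g 0 with rfl | hg0
      · rwa [natDegree_zero]
      · exact (natDegree_lt_iff_degree_lt hg0).2 hg
    simpa only [iterate_derivative_iteratedAntiderivative] using
      H _ ((natDegree_iteratedAntiderivative_le n g).trans (by omega))
  · rintro rfl f hf
    apply integral_eval_mul_eval_monicLegendre_eq_zero
    rw [← Function.iterate_add_apply]
    exact iterate_derivative_eq_zero (by omega)
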